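/- Let N ≥ 1 be an integer, let p, r ∈ [2, ∞) be real numbers, and set C_{r,p} := (r−1)·(p/(p+r−2))^p. Let K : ℝ^N × ℝ^N → [0, ∞] be measurable and let u : ℝ^N → ℝ be measurable; define v(x) := |u(x)|^{(r−2)/p} u(x). Then C_{r,p} · ∬_{ℝ^N×ℝ^N} |v(x)−v(y)|^p · K(x,y) dx dy ≤ ∬_{ℝ^N×ℝ^N} |u(x)−u(y)|^{p−2}(u(x)−u(y))·(|u(x)|^{r−2}u(x) − |u(y)|^{r−2}u(y)) · K(x,y) dx dy, where both sides are (possibly infinite) integrals of nonnegative measurable functions; in particular the integrand on the right-hand side is pointwise nonnegative. -/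

import Mathlib

/-!
Write `S_β t = |t|^β t`, so that `S_β' = (β + 1)|t|^β` and, for `b ≤ a`,
`S_β a - S_β b = (β + 1) ∫_b^a |t|^β`. With `β = (r - 2)/p`, Jensen's inequality for `x ↦ x^p`
applied to the average of `|t|^β` over `[b, a]` gives
`(∫_b^a |t|^β)^p ≤ (a - b)^(p-1) ∫_b^a |t|^(r-2) = (a - b)^(p-1) (S_{r-2} a - S_{r-2} b)/(r - 1)`.
Since `β + 1 = (p + r - 2)/p`, this is the comparison for `a = u x`, `b = u y` with the constant
`C_{r,p}`; in particular its right-hand side is nonnegative. Integrating against `K` finishes.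
-/

open MeasureTheory Filter Set Topology intervalIntegral
open scoped ENNReal Interval

lemma rpow_intervalIntegral_le {f : ℝ → ℝ} {p a b : ℝ} (hp : 1 ≤ p) (hab : a ≤ b)
    (hf₀ : ∀ t ∈ Ι a b, 0 ≤ f t) (hf : IntervalIntegrable f volume a b)
    (hfp : IntervalIntegrable (fun t => f t ^ p) volume a b) :
    (∫ t in a..b, f t) ^ p ≤ (b - a) ^ (p - 1) * ∫ t in a..b, f t ^ p := by
  rcases hab.eq_or_lt with rfl | hab
  · simp [Real.zero_rpow (by linarith : p ≠ 0)]
  have hlen : volume (Ι a b) = ENNReal.ofReal (b - a) := by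
    rw [uIoc_of_le hab.le, Real.volume_Ioc]
  have jensen := (convexOn_rpow hp).map_set_average_le
    (continuousOn_id.rpow_const fun _ _ => Or.inr (by linarith)) isClosed_Ici
    (by simp [hlen, hab]) (by simp [hlen])
    ((ae_restrict_iff' measurableSet_uIoc).2 (Eventually.of_forall hf₀)) hf.def' hfp.def'
  have hI : 0 ≤ ∫ t in a..b, f t := by
    rw [integral_of_le hab.le]
    exact setIntegral_nonneg measurableSet_Ioc fun t ht => hf₀ t (by rwa [uIoc_of_le hab.le])
  rw [interval_average_eq_div, interval_average_eq_div, Real.div_rpow hI (by linarith),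
    div_le_div_iff₀ (by positivity) (by linarith)] at jensen
  rw [Real.rpow_sub_one (by linarith), div_mul_eq_mul_div, le_div_iff₀ (by linarith)]
  linarith

noncomputable def signedPow (β t : ℝ) : ℝ := |t| ^ β * t

section SignedPow

variable {β : ℝ}

lemma continuous_abs_rpow (hβ : 0 ≤ β) : Continuous fun t : ℝ => |t| ^ β :=
  continuous_abs.rpow_const fun _ => Or.inr hβ

lemma hasDerivAt_signedPow (hβ : 0 ≤ β) (t : ℝ) :
    HasDerivAt (signedPow β) ((β + 1) * |t| ^ β) t := by
  rcases hβ.eq_or_lt with rfl | hβ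
  · have hid : signedPow 0 = id := funext fun t => by simp [signedPow]
    simpa [hid] using hasDerivAt_id t
  rcases eq_or_ne t 0 with rfl | ht
  · rw [abs_zero, Real.zero_rpow hβ.ne', mul_zero, hasDerivAt_iff_tendsto_slope]
    have hlim : Tendsto (fun s : ℝ => |s| ^ β) (𝓝[≠] 0) (𝓝 0) := by
      simpa [Real.zero_rpow hβ.ne'] using
        ((continuous_abs_rpow hβ.le).tendsto 0).mono_left nhdsWithin_le_nhds
    refine hlim.congr' (eventually_nhdsWithin_of_forall fun s (hs : s ≠ 0) => ?_)
    simp only [slope, vsub_eq_sub, smul_eq_mul, signedPow, sub_zero, mul_zero]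
    field_simp
  · have h : HasDerivAt (signedPow β) _ t :=
      ((hasDerivAt_abs ht).rpow_const (p := β) (Or.inl (abs_ne_zero.2 ht))).mul (hasDerivAt_id t)
    refine h.congr_deriv ?_
    rw [Real.rpow_sub_one (abs_ne_zero.2 ht)]
    field_simp
    linear_combination β * sign_mul_self t

lemma integral_abs_rpow (hβ : 0 ≤ β) (a b : ℝ) :
    ∫ t in a..b, |t| ^ β = (signedPow β b - signedPow β a) / (β + 1) := by
  rw [eq_div_iff (by positivity), mul_comm, ← intervalIntegral.integral_const_mul]
  exact integral_eq_sub_of_hasDerivAt (fun t _ => hasDerivAt_signedPow hβ t)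
    ((continuous_const.mul (continuous_abs_rpow hβ)).intervalIntegrable _ _)

lemma signedPow_sub_rpow_le {p a b : ℝ} (hβ : 0 ≤ β) (hp : 1 ≤ p) (hba : b ≤ a) :
    (β * p + 1) * (β + 1)⁻¹ ^ p * |signedPow β a - signedPow β b| ^ p ≤
      (a - b) ^ (p - 1) * (signedPow (β * p) a - signedPow (β * p) b) := by
  have hβp : 0 ≤ β * p := mul_nonneg hβ (by linarith)
  have hcont := continuous_abs_rpow hβ
  have jensen := rpow_intervalIntegral_le hp hba (fun t _ => by positivity)
    (hcont.intervalIntegrable _ _)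
    ((hcont.rpow_const fun _ => Or.inr (by linarith)).intervalIntegrable _ _)
  simp only [← Real.rpow_mul (abs_nonneg _)] at jensen
  rw [integral_abs_rpow hβ, integral_abs_rpow hβp] at jensen
  have hΔ : 0 ≤ signedPow β a - signedPow β b := by
    have h := integral_nonneg (μ := volume) hba fun t _ => Real.rpow_nonneg (abs_nonneg t) β
    rw [integral_abs_rpow hβ] at h
    exact (div_nonneg_iff.1 h).resolve_right (fun h' => by linarith [h'.2]) |>.1
  calc (β * p + 1) * (β + 1)⁻¹ ^ p * |signedPow β a - signedPow β b| ^ p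
      = (β * p + 1) * ((signedPow β a - signedPow β b) / (β + 1)) ^ p := by
        rw [abs_of_nonneg hΔ, mul_assoc, ← Real.mul_rpow (by positivity) hΔ, inv_mul_eq_div]
    _ ≤ (β * p + 1) * ((a - b) ^ (p - 1) *
          ((signedPow (β * p) a - signedPow (β * p) b) / (β * p + 1))) := by gcongr
    _ = (a - b) ^ (p - 1) * (signedPow (β * p) a - signedPow (β * p) b) := by field_simp

end SignedPow

theorem stroock_varopoulos_pointwise {p r : ℝ} (hp : 1 < p) (hr : 2 ≤ r) (a b : ℝ) :
    (r - 1) * (p / (p + r - 2)) ^ p * |signedPow ((r - 2) / p) a - signedPow ((r - 2) / p) b| ^ p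
      ≤ |a - b| ^ (p - 2) * (a - b) * (signedPow (r - 2) a - signedPow (r - 2) b) := by
  wlog hba : b ≤ a generalizing a b
  · convert this b a (le_of_not_ge hba) using 1 <;> rw [abs_sub_comm]
    ring
  have hp₀ : p ≠ 0 := (by linarith : 0 < p).ne'
  have key := signedPow_sub_rpow_le (β := (r - 2) / p)
    (div_nonneg (by linarith) (by linarith)) hp.le hba
  rw [div_mul_cancel₀ _ hp₀, show (r - 2) / p + 1 = (p + r - 2) / p by field_simp; ring, inv_div,
    show r - 2 + 1 = r - 1 by ring] at key
  rwa [abs_of_nonneg (sub_nonneg.2 hba), ← Real.rpow_add_one' (sub_nonneg.2 hba) (by linarith),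
    show p - 2 + 1 = p - 1 by ring]

theorem stroock_varopoulos_energy_general (N : ℕ) (p r : ℝ) (hp : 2 ≤ p) (hr : 2 ≤ r)
    (K : (Fin N → ℝ) × (Fin N → ℝ) → ℝ≥0∞)
    (u : (Fin N → ℝ) → ℝ)
    (v : (Fin N → ℝ) → ℝ) (hv : v = fun x => |u x| ^ ((r - 2) / p) * u x) :
    (∀ x y : Fin N → ℝ,
        0 ≤ |u x - u y| ^ (p - 2) * (u x - u y) *
            (|u x| ^ (r - 2) * u x - |u y| ^ (r - 2) * u y)) ∧
      ENNReal.ofReal ((r - 1) * (p / (p + r - 2)) ^ p) *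
          ∫⁻ z : (Fin N → ℝ) × (Fin N → ℝ),
            ENNReal.ofReal (|v z.1 - v z.2| ^ p) * K z ≤
        ∫⁻ z : (Fin N → ℝ) × (Fin N → ℝ),
          ENNReal.ofReal (|u z.1 - u z.2| ^ (p - 2) * (u z.1 - u z.2) *
            (|u z.1| ^ (r - 2) * u z.1 - |u z.2| ^ (r - 2) * u z.2)) * K z := by
  have hC : 0 ≤ (r - 1) * (p / (p + r - 2)) ^ p :=
    mul_nonneg (by linarith) (Real.rpow_nonneg (div_nonneg (by linarith) (by linarith)) p)
  have pointwise := stroock_varopoulos_pointwise (p := p) (by linarith) hr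
  refine ⟨fun x y => le_trans (by positivity) (pointwise (u x) (u y)), ?_⟩
  rw [← lintegral_const_mul' _ _ ENNReal.ofReal_ne_top]
  refine lintegral_mono fun z => ?_
  rw [← mul_assoc, ← ENNReal.ofReal_mul hC, hv]
  gcongr ENNReal.ofReal ?_ * _
  exact pointwise (u z.1) (u z.2)

/-- Nonlinear Stroock–Varopoulos comparison of energy forms (Lemma `comp`):
for `p, r ∈ [2, ∞)`, `C_{r,p} = (r-1)(p/(p+r-2))^p`, a measurable nonnegative kernel
`K` on `ℝ^N × ℝ^N` and a measurable `u : ℝ^N → ℝ`, setting `v = |u|^{(r-2)/p} u`, the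
integrand `|u(x)-u(y)|^{p-2}(u(x)-u(y))(|u(x)|^{r-2}u(x) - |u(y)|^{r-2}u(y))` is
pointwise nonnegative and
`C_{r,p} ∬ |v(x)-v(y)|^p K(x,y) ≤ ∬ |u(x)-u(y)|^{p-2}(u(x)-u(y))(|u|^{r-2}u(x)-|u|^{r-2}u(y)) K(x,y)`. -/
theorem stroock_varopoulos_energy (N : ℕ) (hN : 1 ≤ N) (p r : ℝ) (hp : 2 ≤ p) (hr : 2 ≤ r)
    (K : (Fin N → ℝ) × (Fin N → ℝ) → ℝ≥0∞) (hK : Measurable K)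
    (u : (Fin N → ℝ) → ℝ) (hu : Measurable u)
    (v : (Fin N → ℝ) → ℝ) (hv : v = fun x => |u x| ^ ((r - 2) / p) * u x) :
    (∀ x y : Fin N → ℝ,
        0 ≤ |u x - u y| ^ (p - 2) * (u x - u y) *
            (|u x| ^ (r - 2) * u x - |u y| ^ (r - 2) * u y)) ∧
      ENNReal.ofReal ((r - 1) * (p / (p + r - 2)) ^ p) *
          ∫⁻ z : (Fin N → ℝ) × (Fin N → ℝ),
            ENNReal.ofReal (|v z.1 - v z.2| ^ p) * K z ≤
        ∫⁻ z : (Fin N → ℝ) × (Fin N → ℝ),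
          ENNReal.ofReal (|u z.1 - u z.2| ^ (p - 2) * (u z.1 - u z.2) *
            (|u z.1| ^ (r - 2) * u z.1 - |u z.2| ^ (r - 2) * u z.2)) * K z :=
  stroock_varopoulos_energy_general N p r hp hr K u v hv
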